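/- Suppose the Verblunsky coefficients satisfy |α_n| ≤ C q^n for all n ≥ 0, where C > 0 and q ∈ (0,1). Then for every q' ∈ (q,1) there is a constant C_{q'} > 0 such that for all n ≥ 0 and all z with |z| ≤ 1, |Φ_n(z)| ≤ C_{q'} (max(|z|, q'))^n. -/

import Mathlib

/-!
Fix `r = max(|z|, q')`. The Szegő recursion and its reversed form
`Φ*_{n+1} = Φ*_n - α_n z Φ_n` couple `Φ_n` and `Φ*_n`, and jointly show that both
`|Φ_n(z)| / r^n` and `|Φ*_n(z)|` grow at step `k` by at most the factor `1 + |α_k| / r^(k+1)`.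
Since `r ≥ q'`, these factors are dominated by `1 + (C/q') (q/q')^k`, whose product converges.
-/

open Polynomial Filter Topology

/-- The monic orthogonal polynomials on the unit circle, defined by the Szegő
recursion `Φ₀ = 1`, `Φ_{n+1}(z) = z Φ_n(z) - conj(α_n) Φ_n^*(z)`, where the reversed
polynomial is `P^*(z) = Σ_{j=0}^n conj(c_{n-j}) z^j`. -/
noncomputable def PhiP (α : ℕ → ℂ) : ℕ → Polynomial ℂ
  | 0 => 1
  | n + 1 => X * PhiP α n -
      Polynomial.C ((starRingEnd ℂ) (α n)) *
        Polynomial.reflect n (Polynomial.map (starRingEnd ℂ) (PhiP α n))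

/-- The reversed polynomial `Φ_n^*(z) = z^n conj(Φ_n(1/conj z))`. -/
noncomputable def PhiStarP (α : ℕ → ℂ) (n : ℕ) : Polynomial ℂ :=
  Polynomial.reflect n (Polynomial.map (starRingEnd ℂ) (PhiP α n))

section Reflect

variable {R : Type*} [Semiring R] {p : R[X]} {n : ℕ}

lemma reflect_succ_X_mul (hp : p.natDegree ≤ n) : reflect (n + 1) (X * p) = reflect n p := by
  rw [add_comm, reflect_mul X p natDegree_X_le hp, reflect_one_X, one_mul]

lemma reflect_succ_reflect (hp : p.natDegree ≤ n) : reflect (n + 1) (reflect n p) = X * p := by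
  rw [← reflect_succ_X_mul hp, reflect_reflect]

end Reflect

lemma natDegree_phiP_le (α : ℕ → ℂ) : ∀ n, (PhiP α n).natDegree ≤ n
  | 0 => by simp [PhiP]
  | n + 1 => by
    have hstar : (PhiStarP α n).natDegree ≤ n :=
      natDegree_reflect_le.trans (max_le le_rfl (natDegree_map_le.trans (natDegree_phiP_le α n)))
    refine (natDegree_sub_le _ _).trans (max_le ?_ ?_)
    · exact natDegree_mul_le.trans
        (by rw [natDegree_X, add_comm]; exact Nat.succ_le_succ (natDegree_phiP_le α n))
    · exact natDegree_C_mul_le _ _ |>.trans (hstar.trans n.le_succ)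

lemma phiP_succ (α : ℕ → ℂ) (n : ℕ) :
    PhiP α (n + 1) = X * PhiP α n - C (starRingEnd ℂ (α n)) * PhiStarP α n :=
  rfl

lemma phiStarP_succ (α : ℕ → ℂ) (n : ℕ) :
    PhiStarP α (n + 1) = PhiStarP α n - C (α n) * (X * PhiP α n) := by
  have hdeg : ((PhiP α n).map (starRingEnd ℂ)).natDegree ≤ n :=
    natDegree_map_le.trans (natDegree_phiP_le α n)
  have hconj : ((PhiP α n).map (starRingEnd ℂ)).map (starRingEnd ℂ) = PhiP α n := by
    simp [Polynomial.map_map]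
  rw [PhiStarP, phiP_succ, Polynomial.map_sub, Polynomial.map_mul, Polynomial.map_mul, map_X,
    map_C, Complex.conj_conj, reflect_sub, reflect_succ_X_mul hdeg, reflect_C_mul, PhiStarP,
    ← reflect_map, hconj, reflect_succ_reflect (natDegree_phiP_le α n)]

lemma eval_phiP_succ (α : ℕ → ℂ) (n : ℕ) (z : ℂ) :
    (PhiP α (n + 1)).eval z =
      z * (PhiP α n).eval z - starRingEnd ℂ (α n) * (PhiStarP α n).eval z := by
  simp [phiP_succ]

lemma eval_phiStarP_succ (α : ℕ → ℂ) (n : ℕ) (z : ℂ) :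
    (PhiStarP α (n + 1)).eval z = (PhiStarP α n).eval z - α n * (z * (PhiP α n).eval z) := by
  simp [phiStarP_succ]

lemma norm_eval_phiP_le_prod (α : ℕ → ℂ) {r : ℝ} (hr0 : 0 < r) (hr1 : r ≤ 1) {z : ℂ}
    (hz : ‖z‖ ≤ r) (n : ℕ) :
    ‖(PhiP α n).eval z‖ ≤ (∏ k ∈ Finset.range n, (1 + ‖α k‖ / r ^ (k + 1))) * r ^ n ∧
      ‖(PhiStarP α n).eval z‖ ≤ ∏ k ∈ Finset.range n, (1 + ‖α k‖ / r ^ (k + 1)) := by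
  induction n with
  | zero => simp [PhiP, PhiStarP]
  | succ n ih =>
    obtain ⟨hΦ, hΦstar⟩ := ih
    set P := ∏ k ∈ Finset.range n, (1 + ‖α k‖ / r ^ (k + 1))
    set a := ‖α n‖ / r ^ (n + 1)
    have hP : 0 ≤ P := (norm_nonneg _).trans hΦstar
    have hαa : ‖α n‖ = a * r ^ (n + 1) := (div_mul_cancel₀ _ (by positivity)).symm
    have hr2 : r ^ (n + 1) * r ^ (n + 1) ≤ 1 := mul_le_one₀ (pow_le_one₀ hr0.le hr1)
      (by positivity) (pow_le_one₀ hr0.le hr1)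
    rw [Finset.prod_range_succ, eval_phiP_succ, eval_phiStarP_succ]
    constructor
    · calc _ ≤ ‖z‖ * ‖(PhiP α n).eval z‖ + ‖α n‖ * ‖(PhiStarP α n).eval z‖ :=
          (norm_sub_le _ _).trans_eq (by simp)
        _ ≤ r * (P * r ^ n) + a * r ^ (n + 1) * P := by rw [hαa]; gcongr
        _ = P * (1 + a) * r ^ (n + 1) := by ring
    · calc _ ≤ ‖(PhiStarP α n).eval z‖ + ‖α n‖ * (‖z‖ * ‖(PhiP α n).eval z‖) :=
          (norm_sub_le _ _).trans_eq (by simp)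
        _ ≤ P + a * r ^ (n + 1) * (r * (P * r ^ n)) := by rw [hαa]; gcongr
        _ = P + a * P * (r ^ (n + 1) * r ^ (n + 1)) := by ring
        _ ≤ P + a * P * 1 := by gcongr
        _ = P * (1 + a) := by ring

lemma summable_div_pow_of_le_geometric {a : ℕ → ℝ} {C q ρ : ℝ} (ha : ∀ n, 0 ≤ a n)
    (hdecay : ∀ n, a n ≤ C * q ^ n) (hq0 : 0 ≤ q) (hqρ : q < ρ) :
    Summable fun n => a n / ρ ^ (n + 1) := by
  have hρ : 0 < ρ := hq0.trans_lt hqρ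
  refine (summable_geometric_of_lt_one (div_nonneg hq0 hρ.le) ((div_lt_one hρ).2 hqρ)).mul_left
    (C / ρ) |>.of_nonneg_of_le (fun n => div_nonneg (ha n) (by positivity)) fun n => ?_
  calc a n / ρ ^ (n + 1) ≤ C * q ^ n / ρ ^ (n + 1) := by gcongr; exact hdecay n
    _ = C / ρ * (q / ρ) ^ n := by rw [div_pow, pow_succ]; field_simp

theorem norm_eval_phiP_le_exp_tsum_mul {α : ℕ → ℂ} {ρ : ℝ} (hρ0 : 0 < ρ) (hρ1 : ρ ≤ 1)
    (hα : Summable fun k => ‖α k‖ / ρ ^ (k + 1)) (n : ℕ) {z : ℂ} (hz : ‖z‖ ≤ 1) :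
    ‖(PhiP α n).eval z‖ ≤ Real.exp (∑' k, ‖α k‖ / ρ ^ (k + 1)) * max ‖z‖ ρ ^ n := by
  set r := max ‖z‖ ρ
  have hr0 : 0 < r := hρ0.trans_le (le_max_right _ _)
  have hprod : ∏ k ∈ Finset.range n, (1 + ‖α k‖ / r ^ (k + 1)) ≤
      Real.exp (∑' k, ‖α k‖ / ρ ^ (k + 1)) :=
    calc _ ≤ ∏ k ∈ Finset.range n, (1 + ‖α k‖ / ρ ^ (k + 1)) := by
          gcongr; exact le_max_right _ _
      _ ≤ Real.exp (∑ k ∈ Finset.range n, ‖α k‖ / ρ ^ (k + 1)) :=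
          Real.prod_one_add_le_exp_sum _ fun k => by positivity
      _ ≤ _ := Real.exp_le_exp.2 (hα.sum_le_tsum _ fun k _ => by positivity)
  calc _ ≤ (∏ k ∈ Finset.range n, (1 + ‖α k‖ / r ^ (k + 1))) * r ^ n :=
        (norm_eval_phiP_le_prod α hr0 (max_le hz hρ1) (le_max_left _ _) n).1
    _ ≤ _ := by gcongr

theorem stmt_2_general (α : ℕ → ℂ)
    (C q : ℝ) (hq0 : 0 < q)
    (hdecay : ∀ n : ℕ, ‖α n‖ ≤ C * q ^ n) :
    ∀ q' : ℝ, q < q' → q' < 1 →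
      ∃ Cq' : ℝ, 0 < Cq' ∧ ∀ n : ℕ, ∀ z : ℂ, ‖z‖ ≤ 1 →
        ‖(PhiP α n).eval z‖ ≤ Cq' * max ‖z‖ q' ^ n := by
  intro q' hqq' hq'1
  have hsum := summable_div_pow_of_le_geometric (fun n => norm_nonneg (α n)) hdecay hq0.le hqq'
  exact ⟨_, Real.exp_pos _, fun n z hz =>
    norm_eval_phiP_le_exp_tsum_mul (hq0.trans hqq') hq'1.le hsum n hz⟩

theorem stmt_2 (α : ℕ → ℂ) (hα : ∀ n, ‖α n‖ < 1)
    (C q : ℝ) (hC : 0 < C) (hq0 : 0 < q) (hq1 : q < 1)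
    (hdecay : ∀ n : ℕ, ‖α n‖ ≤ C * q ^ n) :
    ∀ q' : ℝ, q < q' → q' < 1 →
      ∃ Cq' : ℝ, 0 < Cq' ∧ ∀ n : ℕ, ∀ z : ℂ, ‖z‖ ≤ 1 →
        ‖(PhiP α n).eval z‖ ≤ Cq' * max ‖z‖ q' ^ n :=
  stmt_2_general α C q hq0 hdecay
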